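/- arXiv:1604.06387 — 4 statements merged into one kernel-verified Lean document; each statement's English description precedes it below -/
import Mathlib

section
/- If G is a finitely generated group of polynomial growth (there exist C, D with #B(r) ≤ C·r^D for all r ≥ 1, where B(r) is the ball of radius r for a word length), then G has the Rapid Decay property: there exist constants C', D' such that for every R ∈ ℕ and every finitely supported f : G → ℂ supported on elements of word length at most R, ‖f‖_* ≤ C'·R^{D'}·‖f‖₂. -/
open scoped BigOperators

/-- The ℓ²-norm of a function on a discrete set. -/
noncomputable def l2norm {G : Type*} (g : G → ℂ) : ℝ :=
  Real.sqrt (∑' γ, ‖g γ‖ ^ 2)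

/-- Left convolution of a finitely supported function with an arbitrary function. -/
noncomputable def conv {G : Type*} [Group G] (f : G →₀ ℂ) (ξ : G → ℂ) : G → ℂ :=
  fun γ => ∑ μ ∈ f.support, f μ * ξ (μ⁻¹ * γ)

/-- The operator norm of `f ∈ ℂG` acting by left convolution on `ℓ²(G)`. -/
noncomputable def opNorm {G : Type*} [Group G] (f : G →₀ ℂ) : ℝ :=
  sSup {x : ℝ | ∃ ξ : G → ℂ, Summable (fun γ => ‖ξ γ‖ ^ 2) ∧ l2norm ξ = 1 ∧
    x = l2norm (conv f ξ)}

open scoped ENNReal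

-- auxiliary
private lemma memlp_two {G : Type*} {g : G → ℂ} (h : Summable fun γ => ‖g γ‖ ^ 2) :
    Memℓp g (2 : ℝ≥0∞) := by
  apply memℓp_gen
  have : (2 : ℝ≥0∞).toReal = ((2 : ℕ) : ℝ) := by norm_num
  rw [this]
  simpa only [Real.rpow_natCast] using h

private lemma l2norm_eq_norm {G : Type*} (F : lp (fun _ : G => ℂ) 2) :
    l2norm (⇑F) = ‖F‖ := by
  have h2 : (2 : ℝ≥0∞).toReal = ((2 : ℕ) : ℝ) := by norm_num
  rw [lp.norm_eq_tsum_rpow (by norm_num) F, h2, l2norm, Real.sqrt_eq_rpow]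
  norm_num [Real.rpow_natCast]

private lemma conv_le {G : Type*} [Group G] (f : G →₀ ℂ) (ξ : G → ℂ)
    (hξ : Summable fun γ => ‖ξ γ‖ ^ 2) :
    l2norm (conv f ξ) ≤ (∑ μ ∈ f.support, ‖f μ‖) * l2norm ξ := by
  have htrans : ∀ μ : G, Summable fun γ => ‖ξ (μ⁻¹ * γ)‖ ^ 2 := fun μ =>
    ((Equiv.mulLeft μ⁻¹).summable_iff (f := fun γ => ‖ξ γ‖ ^ 2)).2 hξ
  set T : G → lp (fun _ : G => ℂ) 2 := fun μ => ⟨fun γ => ξ (μ⁻¹ * γ), memlp_two (htrans μ)⟩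
  have hTnorm : ∀ μ : G, ‖T μ‖ = l2norm ξ := by
    intro μ
    rw [← l2norm_eq_norm]
    show Real.sqrt (∑' γ, ‖ξ (μ⁻¹ * γ)‖ ^ 2) = _
    rw [l2norm]
    congr 1
    exact (Equiv.mulLeft μ⁻¹).tsum_eq (fun γ => ‖ξ γ‖ ^ 2)
  set F : lp (fun _ : G => ℂ) 2 := ∑ μ ∈ f.support, f μ • T μ with hFdef
  have hF : ⇑F = conv f ξ := by
    funext γ
    rw [hFdef, lp.coeFn_sum]
    simp only [Finset.sum_apply, conv]
    rfl
  calc l2norm (conv f ξ) = ‖F‖ := by rw [← hF, l2norm_eq_norm]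
    _ ≤ ∑ μ ∈ f.support, ‖f μ • T μ‖ := norm_sum_le _ _
    _ = ∑ μ ∈ f.support, ‖f μ‖ * l2norm ξ := by
        refine Finset.sum_congr rfl fun μ _ => ?_
        rw [norm_smul, hTnorm]
    _ = (∑ μ ∈ f.support, ‖f μ‖) * l2norm ξ := by rw [Finset.sum_mul]

/-- The word length of `γ` with respect to the finite generating set `S`:
the least `n` such that `γ` is a product of `n` elements of `S ∪ S⁻¹`. -/
noncomputable def wordLength {G : Type*} [Group G] (S : Finset G) (γ : G) : ℕ :=
  sInf {n | ∃ l : List G, l.length = n ∧ (∀ s ∈ l, s ∈ S ∨ s⁻¹ ∈ S) ∧ l.prod = γ}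

/-- If a finitely generated group `G` has polynomial growth (`#B(r) ≤ C r^D` for `r ≥ 1`),
then `G` has the Rapid Decay property: there are `C'`, `D'` such that for every `R` and
every `f ∈ ℂG` supported on elements of word length at most `R`,
`‖f‖_* ≤ C' R^{D'} ‖f‖₂`. -/
theorem rapid_decay_of_polynomial_growth {G : Type*} [Group G] [Countable G] (S : Finset G)
    (hgen : ∀ γ : G, ∃ l : List G, (∀ s ∈ l, s ∈ S ∨ s⁻¹ ∈ S) ∧ l.prod = γ)
    (hfin : ∀ r : ℕ, {γ : G | wordLength S γ ≤ r}.Finite)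
    (C D : ℝ) (hC : 0 < C)
    (hpoly : ∀ r : ℕ, 1 ≤ r → ((hfin r).toFinset.card : ℝ) ≤ C * (r : ℝ) ^ D) :
    ∃ C' D' : ℝ, 0 < C' ∧ ∀ R : ℕ, 1 ≤ R → ∀ f : G →₀ ℂ,
      (∀ γ ∈ f.support, wordLength S γ ≤ R) →
      opNorm f ≤ C' * (R : ℝ) ^ D' * l2norm (f : G → ℂ) := by
  refine ⟨Real.sqrt C, D / 2, Real.sqrt_pos.2 hC, fun R hR f hsupp => ?_⟩
  have hRpos : (0:ℝ) < R := by exact_mod_cast hR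
  have hfl2 : l2norm (⇑f) = Real.sqrt (∑ μ ∈ f.support, ‖f μ‖ ^ 2) := by
    rw [l2norm]
    congr 1
    exact tsum_eq_sum (fun γ hγ => by rw [Finsupp.notMem_support_iff.1 hγ]; simp)
  have hcard : ((f.support.card : ℝ)) ≤ C * (R:ℝ) ^ D := by
    refine le_trans ?_ (hpoly R hR)
    exact_mod_cast Finset.card_le_card (fun γ hγ => (hfin R).mem_toFinset.2 (hsupp γ hγ))
  have hl1 : (∑ μ ∈ f.support, ‖f μ‖) ≤ Real.sqrt (f.support.card) * l2norm (⇑f) := by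
    rw [hfl2, ← Real.sqrt_mul (Nat.cast_nonneg _)]
    refine Real.le_sqrt_of_sq_le ?_
    calc (∑ μ ∈ f.support, ‖f μ‖) ^ 2 = (∑ μ ∈ f.support, 1 * ‖f μ‖) ^ 2 := by simp
      _ ≤ (∑ μ ∈ f.support, (1:ℝ)^2) * (∑ μ ∈ f.support, ‖f μ‖^2) :=
          Finset.sum_mul_sq_le_sq_mul_sq _ _ _
      _ = (f.support.card : ℝ) * ∑ μ ∈ f.support, ‖f μ‖^2 := by simp
  have hs : Real.sqrt (f.support.card) ≤ Real.sqrt C * (R:ℝ) ^ (D/2) := by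
    calc Real.sqrt (f.support.card) ≤ Real.sqrt (C * (R:ℝ)^D) := Real.sqrt_le_sqrt hcard
      _ = Real.sqrt C * Real.sqrt ((R:ℝ)^D) := Real.sqrt_mul hC.le _
      _ = Real.sqrt C * (R:ℝ)^(D/2) := by
          have hsq : Real.sqrt ((R:ℝ)^D) = (R:ℝ)^(D/2) := by
            rw [Real.sqrt_eq_rpow, ← Real.rpow_mul hRpos.le]
            congr 1
            ring
          rw [hsq]
  have hl2nn : 0 ≤ l2norm (⇑f) := Real.sqrt_nonneg _
  unfold opNorm
  refine Real.sSup_le ?_ ?_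
  · rintro x ⟨ξ, hξ, hξ1, rfl⟩
    calc l2norm (conv f ξ) ≤ (∑ μ ∈ f.support, ‖f μ‖) * l2norm ξ := conv_le f ξ hξ
      _ = ∑ μ ∈ f.support, ‖f μ‖ := by rw [hξ1, mul_one]
      _ ≤ Real.sqrt (f.support.card) * l2norm (⇑f) := hl1
      _ ≤ Real.sqrt C * (R:ℝ)^(D/2) * l2norm (⇑f) :=
          mul_le_mul_of_nonneg_right hs hl2nn
  · exact mul_nonneg (mul_nonneg (Real.sqrt_nonneg _) (Real.rpow_nonneg hRpos.le _)) hl2nn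
end

section
/- If G is a finitely generated amenable group with the Rapid Decay property, then G has polynomial growth. More precisely, if ‖1_{B(r)}‖_* = ‖1_{B(r)}‖₁ for all r (which holds for amenable groups by Leptin's theorem) and the RD inequality ‖f‖_* ≤ P(r)‖f‖₂ holds for all f supported in B(r) with P a polynomial, then √(#B(r)) ≤ P(r) for all r. -/
open scoped BigOperators

/-- The ℓ¹-norm of a finitely supported function. -/
noncomputable def l1norm {G : Type*} (f : G →₀ ℂ) : ℝ := ∑ γ ∈ f.support, ‖f γ‖

/-- If `G` is a finitely generated amenable group (so that by Leptin's theorem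
`‖1_{B(r)}‖_* = ‖1_{B(r)}‖₁` for the characteristic functions of balls) satisfying the
Rapid Decay inequality `‖f‖_* ≤ P(r) ‖f‖₂` for `f` supported in `B(r)`, with `P` a
polynomial, then `√(#B(r)) ≤ P(r)` for all `r`, i.e. `G` has polynomial growth. -/
theorem polynomial_growth_of_amenable_rapid_decay {G : Type*} [Group G] [Countable G]
    (S : Finset G)
    (hgen : ∀ γ : G, ∃ l : List G, (∀ s ∈ l, s ∈ S ∨ s⁻¹ ∈ S) ∧ l.prod = γ)
    (hfin : ∀ r : ℕ, {γ : G | wordLength S γ ≤ r}.Finite)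
    (hleptin : ∀ r : ℕ,
      opNorm (Finsupp.indicator (hfin r).toFinset fun _ _ => (1 : ℂ)) =
      l1norm (Finsupp.indicator (hfin r).toFinset fun _ _ => (1 : ℂ)))
    (P : Polynomial ℝ)
    (hRD : ∀ r : ℕ, ∀ f : G →₀ ℂ, (∀ γ ∈ f.support, wordLength S γ ≤ r) →
      opNorm f ≤ P.eval (r : ℝ) * l2norm (f : G → ℂ)) :
    ∀ r : ℕ, Real.sqrt ((hfin r).toFinset.card) ≤ P.eval (r : ℝ) := by
  intro r
  set T := (hfin r).toFinset with hT
  set f : G →₀ ℂ := Finsupp.indicator T (fun _ _ => (1 : ℂ)) with hf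
  have hmem : ∀ γ ∈ T, f γ = 1 := fun γ hγ => Finsupp.indicator_of_mem hγ _
  have hnmem : ∀ γ ∉ T, f γ = 0 := fun γ hγ => Finsupp.indicator_of_notMem hγ _
  have hsupp : f.support = T := by
    ext γ
    simp only [Finsupp.mem_support_iff]
    constructor
    · intro h
      by_contra hc
      exact h (hnmem γ hc)
    · intro h
      rw [hmem γ h]
      exact one_ne_zero
  have h1 : l1norm f = (T.card : ℝ) := by
    rw [l1norm, hsupp]
    rw [Finset.sum_congr rfl (fun γ hγ => by rw [hmem γ hγ])]
    simp
  have h2 : l2norm (f : G → ℂ) = Real.sqrt T.card := by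
    rw [l2norm]
    congr 1
    rw [tsum_eq_sum (s := T) (fun b hb => by rw [hnmem b hb]; simp)]
    rw [Finset.sum_congr rfl (fun γ hγ => by rw [hmem γ hγ])]
    simp
  have h3 : ∀ γ ∈ f.support, wordLength S γ ≤ r := by
    intro γ hγ
    rw [hsupp, hT, Set.Finite.mem_toFinset] at hγ
    exact hγ
  have key := hRD r f h3
  rw [hleptin r] at key
  rw [← hf, h1, h2] at key
  have hone : (1 : G) ∈ T := by
    rw [hT, Set.Finite.mem_toFinset]
    show wordLength S 1 ≤ r
    have : wordLength S 1 = 0 := by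
      apply Nat.eq_zero_of_le_zero
      apply Nat.sInf_le
      exact ⟨[], rfl, by simp, by simp⟩
    omega
  have hpos : (0 : ℝ) < Real.sqrt T.card := by
    apply Real.sqrt_pos.mpr
    exact_mod_cast Finset.card_pos.mpr ⟨1, hone⟩
  have hsq : Real.sqrt T.card * Real.sqrt T.card = (T.card : ℝ) :=
    Real.mul_self_sqrt (by positivity)
  rw [hT] at hpos hsq ⊢
  nlinarith [key]
end

section
/- Suppose G has the Rapid Decay property with constants C, D: for all n and all f supported on elements of length at most n, ‖f‖_* ≤ C n^D ‖f‖₂. Let f be a finitely supported symmetric probability measure on G (f(γ) = f(γ⁻¹) ≥ 0, Σf = 1) whose support has diameter d, and let ρ_f = ‖f‖_* be its spectral radius. Then for all n ≥ 1, the return probability satisfies f^{(2n)}(e) ≥ c_f · n^{-2D} · ρ_f^{2n}, where c_f = C^{-2} d^{-2D}. -/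
open scoped BigOperators

section Aux
variable {G : Type*} [Group G]

lemma l2norm_nonneg (g : G → ℂ) : 0 ≤ l2norm g := Real.sqrt_nonneg _

lemma l2norm_sq (g : G → ℂ) : l2norm g ^ 2 = ∑' γ, ‖g γ‖ ^ 2 :=
  Real.sq_sqrt (tsum_nonneg fun _ => sq_nonneg _)

lemma summable_shift {ξ : G → ℂ} (h : Summable fun γ => ‖ξ γ‖ ^ 2) (μ : G) :
    Summable fun γ => ‖ξ (μ * γ)‖ ^ 2 :=
  ((Equiv.mulLeft μ).summable_iff (f := fun γ => ‖ξ γ‖ ^ 2)).2 h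

lemma tsum_shift (ξ : G → ℂ) (μ : G) :
    ∑' γ, ‖ξ (μ * γ)‖ ^ 2 = ∑' γ, ‖ξ γ‖ ^ 2 :=
  (Equiv.mulLeft μ).tsum_eq (fun γ => ‖ξ γ‖ ^ 2)

lemma l2norm_shift (ξ : G → ℂ) (μ : G) :
    l2norm (fun γ => ξ (μ * γ)) = l2norm ξ := by
  unfold l2norm; rw [tsum_shift]

/-- Cauchy–Schwarz for tsums of nonnegative reals. -/
lemma tsum_cs {a b : G → ℝ} (ha : ∀ γ, 0 ≤ a γ) (hb : ∀ γ, 0 ≤ b γ)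
    (hsa : Summable fun γ => a γ ^ 2) (hsb : Summable fun γ => b γ ^ 2) :
    Summable (fun γ => a γ * b γ) ∧
      ∑' γ, a γ * b γ ≤ Real.sqrt (∑' γ, a γ ^ 2) * Real.sqrt (∑' γ, b γ ^ 2) := by
  set A := ∑' γ, a γ ^ 2 with hA
  set B := ∑' γ, b γ ^ 2 with hB
  have hA0 : 0 ≤ A := tsum_nonneg fun _ => sq_nonneg _
  have hB0 : 0 ≤ B := tsum_nonneg fun _ => sq_nonneg _
  have key : ∀ s : Finset G, ∑ γ ∈ s, a γ * b γ ≤ Real.sqrt A * Real.sqrt B := by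
    intro s
    have h1 : (∑ γ ∈ s, a γ * b γ) ^ 2 ≤ (∑ γ ∈ s, a γ ^ 2) * (∑ γ ∈ s, b γ ^ 2) :=
      Finset.sum_mul_sq_le_sq_mul_sq s a b
    have h2 : (∑ γ ∈ s, a γ ^ 2) ≤ A := Summable.sum_le_tsum s (fun _ _ => sq_nonneg _) hsa
    have h3 : (∑ γ ∈ s, b γ ^ 2) ≤ B := Summable.sum_le_tsum s (fun _ _ => sq_nonneg _) hsb
    have h4 : (∑ γ ∈ s, a γ * b γ) ^ 2 ≤ A * B :=
      h1.trans (mul_le_mul h2 h3 (Finset.sum_nonneg fun _ _ => sq_nonneg _) hA0)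
    have h5 : ∑ γ ∈ s, a γ * b γ ≤ Real.sqrt (A * B) :=
      Real.le_sqrt_of_sq_le h4
    rwa [Real.sqrt_mul hA0] at h5
  have hsum : Summable (fun γ => a γ * b γ) :=
    summable_of_sum_le (fun γ => mul_nonneg (ha γ) (hb γ)) key
  exact ⟨hsum, Summable.tsum_le_of_sum_le hsum key⟩

/-- pairwise triangle for l2 -/
lemma l2_add {u v : G → ℂ} (hu : Summable fun γ => ‖u γ‖ ^ 2)
    (hv : Summable fun γ => ‖v γ‖ ^ 2) :
    (Summable fun γ => ‖u γ + v γ‖ ^ 2) ∧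
      l2norm (fun γ => u γ + v γ) ≤ l2norm u + l2norm v := by
  obtain ⟨hcs, hcs_le⟩ := tsum_cs (fun γ => norm_nonneg (u γ)) (fun γ => norm_nonneg (v γ)) hu hv
  have hdom : Summable fun γ => ‖u γ‖ ^ 2 + 2 * (‖u γ‖ * ‖v γ‖) + ‖v γ‖ ^ 2 :=
    ((hu.add ((hcs.mul_left 2))).add hv)
  have hpt : ∀ γ, ‖u γ + v γ‖ ^ 2 ≤ ‖u γ‖ ^ 2 + 2 * (‖u γ‖ * ‖v γ‖) + ‖v γ‖ ^ 2 := by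
    intro γ
    have h := norm_add_le (u γ) (v γ)
    calc ‖u γ + v γ‖ ^ 2 ≤ (‖u γ‖ + ‖v γ‖) ^ 2 := by
          exact pow_le_pow_left₀ (norm_nonneg _) h 2
      _ = ‖u γ‖ ^ 2 + 2 * (‖u γ‖ * ‖v γ‖) + ‖v γ‖ ^ 2 := by ring
  have hsum : Summable fun γ => ‖u γ + v γ‖ ^ 2 :=
    Summable.of_nonneg_of_le (fun γ => sq_nonneg _) hpt hdom
  refine ⟨hsum, ?_⟩
  have h1 : ∑' γ, ‖u γ + v γ‖ ^ 2 ≤ (l2norm u + l2norm v) ^ 2 := by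
    have h2 : ∑' γ, ‖u γ + v γ‖ ^ 2 ≤
        ∑' γ, (‖u γ‖ ^ 2 + 2 * (‖u γ‖ * ‖v γ‖) + ‖v γ‖ ^ 2) :=
      Summable.tsum_le_tsum hpt hsum hdom
    have h3 : ∑' γ, (‖u γ‖ ^ 2 + 2 * (‖u γ‖ * ‖v γ‖) + ‖v γ‖ ^ 2)
        = (∑' γ, ‖u γ‖ ^ 2) + 2 * (∑' γ, ‖u γ‖ * ‖v γ‖) + ∑' γ, ‖v γ‖ ^ 2 := by
      rw [Summable.tsum_add (hu.add (hcs.mul_left 2)) hv, Summable.tsum_add hu (hcs.mul_left 2), tsum_mul_left]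
    rw [h3] at h2
    refine h2.trans ?_
    have := hcs_le
    unfold l2norm
    have expand : (Real.sqrt (∑' γ, ‖u γ‖ ^ 2) + Real.sqrt (∑' γ, ‖v γ‖ ^ 2)) ^ 2
        = (∑' γ, ‖u γ‖ ^ 2) + 2 * (Real.sqrt (∑' γ, ‖u γ‖ ^ 2) * Real.sqrt (∑' γ, ‖v γ‖ ^ 2))
          + ∑' γ, ‖v γ‖ ^ 2 := by
      rw [add_sq, Real.sq_sqrt (tsum_nonneg fun _ => sq_nonneg _),
        Real.sq_sqrt (tsum_nonneg fun _ => sq_nonneg _)]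
      ring
    rw [expand]
    gcongr
  have h6 := Real.sqrt_le_sqrt h1
  rwa [Real.sqrt_sq (add_nonneg (l2norm_nonneg u) (l2norm_nonneg v))] at h6

end Aux

section Aux2
variable {G : Type*} [Group G]

lemma summable_smul_l2 (c : ℂ) {ξ : G → ℂ} (h : Summable fun γ => ‖ξ γ‖ ^ 2) :
    Summable fun γ => ‖c * ξ γ‖ ^ 2 := by
  simpa [norm_mul, mul_pow] using h.mul_left (‖c‖ ^ 2)

lemma l2norm_smul (c : ℂ) (ξ : G → ℂ) :
    l2norm (fun γ => c * ξ γ) = ‖c‖ * l2norm ξ := by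
  unfold l2norm
  simp_rw [norm_mul, mul_pow]
  rw [tsum_mul_left, Real.sqrt_mul (sq_nonneg _), Real.sqrt_sq (norm_nonneg c)]

lemma conv_sum_aux {ξ : G → ℂ} (hξ : Summable fun γ => ‖ξ γ‖ ^ 2) (c : G → ℂ) (s : Finset G) :
    (Summable fun γ => ‖∑ μ ∈ s, c μ * ξ (μ⁻¹ * γ)‖ ^ 2) ∧
      l2norm (fun γ => ∑ μ ∈ s, c μ * ξ (μ⁻¹ * γ)) ≤ (∑ μ ∈ s, ‖c μ‖) * l2norm ξ := by
  classical
  induction s using Finset.induction with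
  | empty =>
      constructor
      · simpa using summable_zero
      · simp [l2norm]
  | @insert a s ha ih =>
      have hu : Summable fun γ => ‖c a * ξ (a⁻¹ * γ)‖ ^ 2 :=
        summable_smul_l2 (c a) (summable_shift hξ a⁻¹)
      have hpair := l2_add hu ih.1
      constructor
      · have := hpair.1
        refine Summable.congr this ?_
        intro γ
        rw [Finset.sum_insert ha]
      · have h2 := hpair.2
        have hl2u : l2norm (fun γ => c a * ξ (a⁻¹ * γ)) = ‖c a‖ * l2norm ξ := by
          rw [l2norm_smul (c a) (fun γ => ξ (a⁻¹ * γ))]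
          rw [l2norm_shift ξ a⁻¹]
        have heq : l2norm (fun γ => ∑ μ ∈ insert a s, c μ * ξ (μ⁻¹ * γ))
            = l2norm (fun γ => c a * ξ (a⁻¹ * γ) + ∑ μ ∈ s, c μ * ξ (μ⁻¹ * γ)) := by
          congr 1
          funext γ
          rw [Finset.sum_insert ha]
        rw [heq, Finset.sum_insert ha, add_mul, ← hl2u]
        exact h2.trans (add_le_add le_rfl ih.2)

lemma conv_summable (g : G →₀ ℂ) {ξ : G → ℂ} (hξ : Summable fun γ => ‖ξ γ‖ ^ 2) :
    Summable fun γ => ‖conv g ξ γ‖ ^ 2 :=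
  (conv_sum_aux hξ g g.support).1

lemma l2norm_conv_le (g : G →₀ ℂ) {ξ : G → ℂ} (hξ : Summable fun γ => ‖ξ γ‖ ^ 2) :
    l2norm (conv g ξ) ≤ (∑ μ ∈ g.support, ‖g μ‖) * l2norm ξ :=
  (conv_sum_aux hξ g g.support).2

lemma l2norm_eq_zero_iff {ξ : G → ℂ} (hξ : Summable fun γ => ‖ξ γ‖ ^ 2)
    (h : l2norm ξ = 0) : ∀ γ, ξ γ = 0 := by
  have htsum : ∑' γ, ‖ξ γ‖ ^ 2 = 0 := by
    have h0 : 0 ≤ ∑' γ, ‖ξ γ‖ ^ 2 := tsum_nonneg fun _ => sq_nonneg _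
    have h1 := Real.sqrt_eq_zero'.1 h
    linarith
  intro γ
  have hle : ‖ξ γ‖ ^ 2 ≤ 0 := htsum ▸ Summable.le_tsum hξ γ (fun _ _ => sq_nonneg _)
  have : ‖ξ γ‖ ^ 2 = 0 := le_antisymm hle (sq_nonneg _)
  have : ‖ξ γ‖ = 0 := by
    nlinarith [norm_nonneg (ξ γ), sq_nonneg (‖ξ γ‖)]
  exact norm_eq_zero.1 this

variable [DecidableEq G]

/-- the delta function at identity -/
noncomputable def deltaOne (G : Type*) [Group G] [DecidableEq G] : G → ℂ :=
  fun γ => if γ = 1 then 1 else 0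

lemma deltaOne_summable : Summable fun γ : G => ‖deltaOne G γ‖ ^ 2 := by
  apply summable_of_ne_finset_zero (s := {(1 : G)})
  intro γ hγ
  simp only [Finset.mem_singleton] at hγ
  simp [deltaOne, hγ]

lemma deltaOne_l2norm : l2norm (deltaOne G) = 1 := by
  unfold l2norm
  rw [tsum_eq_sum (s := {(1 : G)}) (by intro γ hγ; simp only [Finset.mem_singleton] at hγ; simp [deltaOne, hγ])]
  simp [deltaOne]

lemma conv_deltaOne (g : G →₀ ℂ) : conv g (deltaOne G) = g := by
  classical
  funext γ
  unfold conv deltaOne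
  have h1 : (∑ μ ∈ g.support, g μ * (if μ⁻¹ * γ = 1 then (1:ℂ) else 0))
       = ∑ μ ∈ g.support, (if μ = γ then g μ else 0) := by
    apply Finset.sum_congr rfl
    intro μ _
    simp only [inv_mul_eq_one]
    by_cases h : μ = γ <;> simp [h]
  rw [h1, Finset.sum_ite_eq' g.support γ (fun μ => g μ)]
  by_cases h : γ ∈ g.support
  · simp [h]
  · simp [h, Finsupp.notMem_support_iff.1 h]

end Aux2
section Aux3
variable {G : Type*} [Group G]

lemma opNorm_set_bddAbove (g : G →₀ ℂ) :
    BddAbove {x : ℝ | ∃ ξ : G → ℂ, Summable (fun γ => ‖ξ γ‖ ^ 2) ∧ l2norm ξ = 1 ∧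
      x = l2norm (conv g ξ)} := by
  refine ⟨∑ μ ∈ g.support, ‖g μ‖, ?_⟩
  rintro x ⟨ξ, h1, h2, rfl⟩
  have := l2norm_conv_le g h1
  rwa [h2, mul_one] at this

lemma le_opNorm (g : G →₀ ℂ) {ξ : G → ℂ} (h1 : Summable fun γ => ‖ξ γ‖ ^ 2)
    (h2 : l2norm ξ = 1) : l2norm (conv g ξ) ≤ opNorm g :=
  le_csSup (opNorm_set_bddAbove g) ⟨ξ, h1, h2, rfl⟩

lemma l2norm_le_opNorm (g : G →₀ ℂ) : l2norm (g : G → ℂ) ≤ opNorm g := by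
  classical
  have := le_opNorm g (deltaOne_summable (G := G)) (deltaOne_l2norm (G := G))
  rwa [conv_deltaOne] at this

lemma opNorm_nonneg (g : G →₀ ℂ) : 0 ≤ opNorm g :=
  (l2norm_nonneg _).trans (l2norm_le_opNorm g)

lemma opNorm_le (g : G →₀ ℂ) {B : ℝ} (hB : 0 ≤ B)
    (h : ∀ ξ : G → ℂ, Summable (fun γ => ‖ξ γ‖ ^ 2) → l2norm ξ = 1 → l2norm (conv g ξ) ≤ B) :
    opNorm g ≤ B := by
  apply Real.sSup_le _ hB
  rintro x ⟨ξ, h1, h2, rfl⟩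
  exact h ξ h1 h2

lemma conv_smul (g : G →₀ ℂ) (c : ℂ) (ξ : G → ℂ) :
    conv g (fun γ => c * ξ γ) = fun γ => c * conv g ξ γ := by
  funext γ
  unfold conv
  rw [Finset.mul_sum]
  apply Finset.sum_congr rfl
  intro μ _
  ring

lemma conv_le_opNorm (g : G →₀ ℂ) {ξ : G → ℂ} (hξ : Summable fun γ => ‖ξ γ‖ ^ 2) :
    l2norm (conv g ξ) ≤ opNorm g * l2norm ξ := by
  rcases eq_or_ne (l2norm ξ) 0 with h0 | h0
  · have hz := l2norm_eq_zero_iff hξ h0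
    have hcz : conv g ξ = fun _ => 0 := by
      funext γ; unfold conv; simp [hz]
    rw [hcz, h0, mul_zero]
    simp [l2norm]
  · have ht : 0 < l2norm ξ := lt_of_le_of_ne (l2norm_nonneg ξ) (Ne.symm h0)
    set t := l2norm ξ with hT
    have hs' : Summable fun γ => ‖(t : ℂ)⁻¹ * ξ γ‖ ^ 2 := summable_smul_l2 _ hξ
    have hnorm_t : ‖((t : ℝ) : ℂ)⁻¹‖ = t⁻¹ := by
      rw [norm_inv, Complex.norm_real, Real.norm_eq_abs, abs_of_pos ht]
    have hl2' : l2norm (fun γ => (t : ℂ)⁻¹ * ξ γ) = 1 := by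
      rw [l2norm_smul, hnorm_t, ← hT, inv_mul_cancel₀ (ne_of_gt ht)]
    have hkey := le_opNorm g hs' hl2'
    rw [conv_smul, l2norm_smul, hnorm_t] at hkey
    calc l2norm (conv g ξ) = t * (t⁻¹ * l2norm (conv g ξ)) := by field_simp
    _ ≤ t * opNorm g := by
        have := mul_le_mul_of_nonneg_left hkey ht.le
        exact this
    _ = opNorm g * t := mul_comm _ _

end Aux3
section Aux4
open scoped Pointwise
variable {G : Type*} [Group G]

lemma conv_conv (a b : MonoidAlgebra ℂ G) (ξ : G → ℂ) :
    conv (a * b).coeff ξ = conv a.coeff (conv b.coeff ξ) := by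
  classical
  funext γ
  show ∑ lam ∈ (a * b).coeff.support, (a * b).coeff lam * ξ (lam⁻¹ * γ)
      = ∑ μ ∈ a.coeff.support, a.coeff μ * conv b.coeff ξ (μ⁻¹ * γ)
  have hsub : (a * b).coeff.support ⊆ a.coeff.support * b.coeff.support := MonoidAlgebra.support_coeff_mul_subset a b
  rw [Finset.sum_subset hsub
    (by intro lam _ hnot; rw [Finsupp.notMem_support_iff.1 hnot, zero_mul])]
  have expand : ∀ lam ∈ a.coeff.support * b.coeff.support, (a * b).coeff lam * ξ (lam⁻¹ * γ)
      = ∑ μ ∈ a.coeff.support, a.coeff μ * b.coeff (μ⁻¹ * lam) * ξ (lam⁻¹ * γ) := by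
    intro lam _
    rw [MonoidAlgebra.mul_apply_left, Finsupp.sum, Finset.sum_mul]
  rw [Finset.sum_congr rfl expand, Finset.sum_comm]
  apply Finset.sum_congr rfl
  intro μ hμ
  show ∑ lam ∈ a.coeff.support * b.coeff.support, a.coeff μ * b.coeff (μ⁻¹ * lam) * ξ (lam⁻¹ * γ)
      = a.coeff μ * conv b.coeff ξ (μ⁻¹ * γ)
  have hsub2 : b.coeff.support.image (fun ν => μ * ν) ⊆ a.coeff.support * b.coeff.support := by
    intro x hx
    obtain ⟨ν, hν, rfl⟩ := Finset.mem_image.1 hx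
    exact Finset.mul_mem_mul hμ hν
  rw [← Finset.sum_subset hsub2 ?vanish]
  case vanish =>
    intro lam _ hnot
    have hb : b.coeff (μ⁻¹ * lam) = 0 := by
      by_contra hb
      have : μ⁻¹ * lam ∈ b.coeff.support := Finsupp.mem_support_iff.2 hb
      exact hnot (Finset.mem_image.2 ⟨μ⁻¹ * lam, this, by group⟩)
    rw [hb, mul_zero, zero_mul]
  rw [Finset.sum_image (by intro x _ y _ h; exact mul_left_cancel h)]
  show ∑ ν ∈ b.coeff.support, a.coeff μ * b.coeff (μ⁻¹ * (μ * ν)) * ξ ((μ * ν)⁻¹ * γ) = _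
  unfold conv
  rw [Finset.mul_sum]
  apply Finset.sum_congr rfl
  intro ν _
  rw [inv_mul_cancel_left, mul_inv_rev, mul_assoc, mul_assoc]

/-- self-adjointness predicate -/
def SelfAdj {G : Type*} [Group G] (g : MonoidAlgebra ℂ G) : Prop :=
  ∀ γ : G, (starRingEnd ℂ) (g.coeff γ⁻¹) = g.coeff γ

lemma SelfAdj.conj_apply {g : MonoidAlgebra ℂ G} (hg : SelfAdj g) (γ : G) :
    (starRingEnd ℂ) (g.coeff γ) = g.coeff γ⁻¹ := by
  have := hg γ⁻¹
  rwa [inv_inv] at this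

lemma SelfAdj.mem_support {g : MonoidAlgebra ℂ G} (hg : SelfAdj g) {γ : G}
    (h : γ ∈ g.coeff.support) : γ⁻¹ ∈ g.coeff.support := by
  rw [Finsupp.mem_support_iff] at h ⊢
  intro hc
  apply h
  rw [← hg γ, hc, map_zero]

lemma SelfAdj.mul {a b : MonoidAlgebra ℂ G} (ha : SelfAdj a) (hb : SelfAdj b)
    (hcomm : a * b = b * a) : SelfAdj (a * b) := by
  intro γ
  rw [MonoidAlgebra.mul_apply_left, Finsupp.sum, map_sum]
  have step : ∀ μ ∈ a.coeff.support, (starRingEnd ℂ) (a.coeff μ * b.coeff (μ⁻¹ * γ⁻¹))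
      = a.coeff μ⁻¹ * b.coeff (γ * μ) := by
    intro μ _
    rw [map_mul, ha.conj_apply, hb.conj_apply]
    congr 2
    group
  rw [Finset.sum_congr rfl step]
  have reindex : ∑ μ ∈ a.coeff.support, a.coeff μ⁻¹ * b.coeff (γ * μ)
      = ∑ x ∈ a.coeff.support, b.coeff (γ * x⁻¹) * a.coeff x := by
    refine Finset.sum_nbij' (fun μ => μ⁻¹) (fun x => x⁻¹) ?_ ?_ ?_ ?_ ?_
    · intro μ hμ; exact ha.mem_support hμ
    · intro x hx; exact ha.mem_support hx
    · intro μ _; simp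
    · intro x _; simp
    · intro μ _; rw [inv_inv, mul_comm]
  rw [reindex, hcomm, MonoidAlgebra.mul_apply_right, Finsupp.sum]

lemma SelfAdj.pow {f : MonoidAlgebra ℂ G} (hf : SelfAdj f) (n : ℕ) : SelfAdj (f ^ n) := by
  induction n with
  | zero =>
      classical
      intro γ
      rw [pow_zero]
      show (starRingEnd ℂ) ((1 : MonoidAlgebra ℂ G).coeff γ⁻¹) = (1 : MonoidAlgebra ℂ G).coeff γ
      rw [MonoidAlgebra.one_def, MonoidAlgebra.coeff_single]
      by_cases h : γ = 1
      · subst h; simp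
      · rw [Finsupp.single_apply, Finsupp.single_apply]
        have h2 : γ⁻¹ ≠ 1 := by simpa using h
        simp [Ne.symm h, Ne.symm h2]
  | succ n ih =>
      have : f ^ (n + 1) = f ^ n * f := pow_succ f n
      rw [this]
      exact ih.mul hf ((pow_succ f n).symm.trans (pow_succ' f n))

end Aux4
section Aux5
variable {G : Type*} [Group G]

lemma key_step {g : MonoidAlgebra ℂ G} (hg : SelfAdj g) {ξ : G → ℂ}
    (hξ : Summable fun γ => ‖ξ γ‖ ^ 2) :
    l2norm (conv g.coeff ξ) ^ 2 ≤ l2norm (conv (g * g).coeff ξ) * l2norm ξ := by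
  classical
  set η := conv g.coeff ξ with hη_def
  have hη : Summable fun γ => ‖η γ‖ ^ 2 := conv_summable g.coeff hξ
  set ζ := conv (g * g).coeff ξ with hζ_def
  have hζ : Summable fun γ => ‖ζ γ‖ ^ 2 := conv_summable (g * g).coeff hξ
  have cross1 : ∀ μ : G, Summable fun γ => ξ (μ⁻¹ * γ) * (starRingEnd ℂ) (η γ) := by
    intro μ
    apply Summable.of_norm
    have h := (tsum_cs (fun γ => norm_nonneg (ξ (μ⁻¹ * γ))) (fun γ => norm_nonneg (η γ))
      (summable_shift hξ μ⁻¹) hη).1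
    refine h.congr ?_
    intro γ
    simp [norm_mul]
  have cross2 : ∀ μ : G, Summable fun γ => ξ γ * (starRingEnd ℂ) (η (μ * γ)) := by
    intro μ
    apply Summable.of_norm
    have h := (tsum_cs (fun γ => norm_nonneg (ξ γ)) (fun γ => norm_nonneg (η (μ * γ)))
      hξ (summable_shift hη μ)).1
    refine h.congr ?_
    intro γ
    simp [norm_mul]
  have cross3 : Summable fun γ => ξ γ * (starRingEnd ℂ) (ζ γ) := by
    apply Summable.of_norm
    have h := (tsum_cs (fun γ => norm_nonneg (ξ γ)) (fun γ => norm_nonneg (ζ γ)) hξ hζ).1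
    refine h.congr ?_
    intro γ
    simp [norm_mul]
  -- Step A : the diagonal sum as a complex number
  have stepA : ((∑' γ, ‖η γ‖ ^ 2 : ℝ) : ℂ) = ∑' γ, η γ * (starRingEnd ℂ) (η γ) := by
    rw [Complex.ofReal_tsum]
    apply tsum_congr
    intro γ
    rw [Complex.mul_conj']
    norm_cast
  -- Step B : move g to the other side
  have stepB : (∑' γ, η γ * (starRingEnd ℂ) (η γ)) = ∑' γ, ξ γ * (starRingEnd ℂ) (ζ γ) := by
    have e1 : (∑' γ, η γ * (starRingEnd ℂ) (η γ))
        = ∑' γ, ∑ μ ∈ g.coeff.support, g.coeff μ * (ξ (μ⁻¹ * γ) * (starRingEnd ℂ) (η γ)) := by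
      apply tsum_congr
      intro γ
      rw [hη_def]
      show conv g.coeff ξ γ * _ = _
      unfold conv
      rw [Finset.sum_mul]
      apply Finset.sum_congr rfl
      intro μ _
      ring
    have e2 : (∑' γ, ∑ μ ∈ g.coeff.support, g.coeff μ * (ξ (μ⁻¹ * γ) * (starRingEnd ℂ) (η γ)))
        = ∑ μ ∈ g.coeff.support, ∑' γ, g.coeff μ * (ξ (μ⁻¹ * γ) * (starRingEnd ℂ) (η γ)) :=
      Summable.tsum_finsetSum (fun μ _ => (cross1 μ).mul_left (g.coeff μ))
    have e3 : ∀ μ : G, (∑' γ, g.coeff μ * (ξ (μ⁻¹ * γ) * (starRingEnd ℂ) (η γ)))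
        = ∑' γ, g.coeff μ * (ξ γ * (starRingEnd ℂ) (η (μ * γ))) := by
      intro μ
      rw [← (Equiv.mulLeft μ).tsum_eq (fun γ => g.coeff μ * (ξ (μ⁻¹ * γ) * (starRingEnd ℂ) (η γ)))]
      apply tsum_congr
      intro γ
      simp [Equiv.coe_mulLeft, inv_mul_cancel_left]
    have e4 : (∑ μ ∈ g.coeff.support, ∑' γ, g.coeff μ * (ξ γ * (starRingEnd ℂ) (η (μ * γ))))
        = ∑' γ, ∑ μ ∈ g.coeff.support, g.coeff μ * (ξ γ * (starRingEnd ℂ) (η (μ * γ))) :=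
      (Summable.tsum_finsetSum (fun μ _ => (cross2 μ).mul_left (g.coeff μ))).symm
    have e5 : ∀ γ : G, (∑ μ ∈ g.coeff.support, g.coeff μ * (ξ γ * (starRingEnd ℂ) (η (μ * γ))))
        = ξ γ * (starRingEnd ℂ) (ζ γ) := by
      intro γ
      have inner : (∑ μ ∈ g.coeff.support, (starRingEnd ℂ) (g.coeff μ) * η (μ * γ)) = ζ γ := by
        have r1 : ∀ μ ∈ g.coeff.support, (starRingEnd ℂ) (g.coeff μ) * η (μ * γ) = g.coeff μ⁻¹ * η (μ * γ) := by
          intro μ _; rw [hg.conj_apply]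
        rw [Finset.sum_congr rfl r1]
        have r2 : (∑ μ ∈ g.coeff.support, g.coeff μ⁻¹ * η (μ * γ))
            = ∑ μ ∈ g.coeff.support, g.coeff μ * η (μ⁻¹ * γ) := by
          refine Finset.sum_nbij' (fun μ => μ⁻¹) (fun μ => μ⁻¹) ?_ ?_ ?_ ?_ ?_
          · intro μ hμ; exact hg.mem_support hμ
          · intro μ hμ; exact hg.mem_support hμ
          · intro μ _; simp
          · intro μ _; simp
          · intro μ _; rw [inv_inv]
        rw [r2]
        show conv g.coeff η γ = ζ γ
        rw [hζ_def, conv_conv, ← hη_def]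
      have expand : ξ γ * (starRingEnd ℂ) (∑ μ ∈ g.coeff.support, (starRingEnd ℂ) (g.coeff μ) * η (μ * γ))
          = ∑ μ ∈ g.coeff.support, g.coeff μ * (ξ γ * (starRingEnd ℂ) (η (μ * γ))) := by
        rw [map_sum, Finset.mul_sum]
        apply Finset.sum_congr rfl
        intro μ _
        rw [map_mul, Complex.conj_conj]
        ring
      rw [← expand, inner]
    exact e1.trans (e2.trans ((Finset.sum_congr rfl (fun μ _ => e3 μ)).trans
      (e4.trans (tsum_congr e5))))
  -- Step C : Cauchy-Schwarz
  have hre : l2norm η ^ 2 = (∑' γ, ξ γ * (starRingEnd ℂ) (ζ γ)).re := by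
    rw [l2norm_sq, ← stepB, ← stepA, Complex.ofReal_re]
  have hnormsummable : Summable fun γ => ‖ξ γ * (starRingEnd ℂ) (ζ γ)‖ := by
    have h := (tsum_cs (fun γ => norm_nonneg (ξ γ)) (fun γ => norm_nonneg (ζ γ)) hξ hζ).1
    refine h.congr ?_
    intro γ
    simp [norm_mul]
  have habs : (∑' γ, ξ γ * (starRingEnd ℂ) (ζ γ)).re ≤ l2norm ξ * l2norm ζ := by
    have h1 : (∑' γ, ξ γ * (starRingEnd ℂ) (ζ γ)).re ≤ ‖∑' γ, ξ γ * (starRingEnd ℂ) (ζ γ)‖ :=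
      Complex.re_le_norm _
    have h2 : ‖∑' γ, ξ γ * (starRingEnd ℂ) (ζ γ)‖ ≤ ∑' γ, ‖ξ γ * (starRingEnd ℂ) (ζ γ)‖ :=
      norm_tsum_le_tsum_norm hnormsummable
    have h3 : (∑' γ, ‖ξ γ * (starRingEnd ℂ) (ζ γ)‖) = ∑' γ, ‖ξ γ‖ * ‖ζ γ‖ := by
      apply tsum_congr; intro γ; simp [norm_mul]
    have h4 := (tsum_cs (fun γ => norm_nonneg (ξ γ)) (fun γ => norm_nonneg (ζ γ)) hξ hζ).2
    calc (∑' γ, ξ γ * (starRingEnd ℂ) (ζ γ)).re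
        ≤ ∑' γ, ‖ξ γ * (starRingEnd ℂ) (ζ γ)‖ := h1.trans h2
      _ = ∑' γ, ‖ξ γ‖ * ‖ζ γ‖ := h3
      _ ≤ Real.sqrt (∑' γ, ‖ξ γ‖ ^ 2) * Real.sqrt (∑' γ, ‖ζ γ‖ ^ 2) := h4
      _ = l2norm ξ * l2norm ζ := rfl
  rw [hre]
  exact habs.trans (le_of_eq (mul_comm _ _))

end Aux5
section Aux6
variable {G : Type*} [Group G]

lemma opNorm_mul_le (a b : MonoidAlgebra ℂ G) : opNorm (a * b).coeff ≤ opNorm a.coeff * opNorm b.coeff := by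
  apply opNorm_le _ (mul_nonneg (opNorm_nonneg a.coeff) (opNorm_nonneg b.coeff))
  intro ξ h1 h2
  rw [conv_conv]
  calc l2norm (conv a.coeff (conv b.coeff ξ)) ≤ opNorm a.coeff * l2norm (conv b.coeff ξ) :=
        conv_le_opNorm a.coeff (conv_summable b.coeff h1)
    _ ≤ opNorm a.coeff * (opNorm b.coeff * l2norm ξ) :=
        mul_le_mul_of_nonneg_left (conv_le_opNorm b.coeff h1) (opNorm_nonneg a.coeff)
    _ = opNorm a.coeff * opNorm b.coeff := by rw [h2, mul_one]

lemma opNorm_pow_le (f : MonoidAlgebra ℂ G) : ∀ n : ℕ, 1 ≤ n →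
    opNorm (f ^ n).coeff ≤ opNorm f.coeff ^ n := by
  intro n
  induction n with
  | zero => intro h; omega
  | succ n ih =>
      intro _
      rcases Nat.eq_zero_or_pos n with h | h
      · subst h; rw [zero_add, pow_one, pow_one]
      · have hn : 1 ≤ n := h
        rw [pow_succ, pow_succ]
        exact (opNorm_mul_le _ _).trans
          (mul_le_mul_of_nonneg_right (ih hn) (opNorm_nonneg f.coeff))

lemma conv_pow_two_pow_le {f : MonoidAlgebra ℂ G} (hf : SelfAdj f) (k : ℕ)
    {ξ : G → ℂ} (h1 : Summable fun γ => ‖ξ γ‖ ^ 2) (h2 : l2norm ξ = 1) :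
    l2norm (conv f.coeff ξ) ^ (2 ^ k) ≤ l2norm (conv (f ^ (2 ^ k)).coeff ξ) := by
  induction k with
  | zero => simp
  | succ k ih =>
      have hg : SelfAdj (f ^ (2 ^ k)) := hf.pow _
      have hks := key_step hg h1
      have hsq : f ^ (2 ^ k) * f ^ (2 ^ k) = f ^ (2 ^ (k + 1)) := by
        rw [← pow_add]
        congr 1
        omega
      calc l2norm (conv f.coeff ξ) ^ (2 ^ (k + 1))
          = (l2norm (conv f.coeff ξ) ^ (2 ^ k)) ^ 2 := by rw [← pow_mul, pow_succ]
        _ ≤ (l2norm (conv (f ^ (2 ^ k)).coeff ξ)) ^ 2 :=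
            pow_le_pow_left₀ (pow_nonneg (l2norm_nonneg _) _) ih 2
        _ ≤ l2norm (conv (f ^ (2 ^ (k + 1))).coeff ξ) * l2norm ξ := by rw [← hsq]; exact hks
        _ = l2norm (conv (f ^ (2 ^ (k + 1))).coeff ξ) := by rw [h2, mul_one]

lemma opNorm_pow_two_pow {f : MonoidAlgebra ℂ G} (hf : SelfAdj f) (k : ℕ) :
    opNorm f.coeff ^ (2 ^ k) ≤ opNorm (f ^ (2 ^ k)).coeff := by
  set m := 2 ^ k with hm_def
  have hm : (m : ℝ) ≠ 0 := by positivity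
  have hB : 0 ≤ opNorm (f ^ m).coeff := opNorm_nonneg _
  have hroot : opNorm f.coeff ≤ (opNorm (f ^ m).coeff) ^ ((m : ℝ)⁻¹) := by
    apply Real.sSup_le
    · rintro x ⟨ξ, h1, h2, rfl⟩
      have hx : l2norm (conv f.coeff ξ) ^ m ≤ opNorm (f ^ m).coeff :=
        (conv_pow_two_pow_le hf k h1 h2).trans (le_opNorm _ h1 h2)
      have hx0 : (0 : ℝ) ≤ l2norm (conv f.coeff ξ) := l2norm_nonneg _
      calc l2norm (conv f.coeff ξ)
          = (l2norm (conv f.coeff ξ) ^ m) ^ ((m : ℝ)⁻¹) := by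
            rw [← Real.rpow_natCast (l2norm (conv f.coeff ξ)) m, ← Real.rpow_mul hx0,
              mul_inv_cancel₀ hm, Real.rpow_one]
        _ ≤ (opNorm (f ^ m).coeff) ^ ((m : ℝ)⁻¹) :=
            Real.rpow_le_rpow (pow_nonneg hx0 _) hx (by positivity)
    · exact Real.rpow_nonneg hB _
  have h := pow_le_pow_left₀ (opNorm_nonneg f.coeff) hroot m
  rwa [← Real.rpow_natCast ((opNorm (f ^ m).coeff) ^ ((m : ℝ)⁻¹)) m, ← Real.rpow_mul hB,
    inv_mul_cancel₀ hm, Real.rpow_one] at h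

lemma opNorm_pow_ge {f : MonoidAlgebra ℂ G} (hf : SelfAdj f) (hpos : 0 < opNorm f.coeff)
    (n : ℕ) (hn : 1 ≤ n) : opNorm f.coeff ^ n ≤ opNorm (f ^ n).coeff := by
  have hlt : n < 2 ^ n := Nat.lt_two_pow_self
  have h1 : opNorm f.coeff ^ (2 ^ n) ≤ opNorm (f ^ (2 ^ n)).coeff := opNorm_pow_two_pow hf n
  have hsplit : f ^ (2 ^ n) = f ^ n * f ^ (2 ^ n - n) := by
    rw [← pow_add]
    congr 1
    omega
  have h2 : opNorm (f ^ (2 ^ n)).coeff ≤ opNorm (f ^ n).coeff * opNorm f.coeff ^ (2 ^ n - n) := by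
    rw [hsplit]
    exact (opNorm_mul_le _ _).trans
      (mul_le_mul_of_nonneg_left (opNorm_pow_le f _ (by omega)) (opNorm_nonneg _))
  have h3 : opNorm f.coeff ^ (2 ^ n) = opNorm f.coeff ^ n * opNorm f.coeff ^ (2 ^ n - n) := by
    rw [← pow_add]
    congr 1
    omega
  have hc : 0 < opNorm f.coeff ^ (2 ^ n - n) := pow_pos hpos _
  exact le_of_mul_le_mul_right (by rw [← h3]; exact h1.trans h2) hc

end Aux6
section Aux7
variable {G : Type*} [Group G]

lemma pow_real_nonneg {f : MonoidAlgebra ℂ G} (hreal : ∀ γ, (f.coeff γ).im = 0)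
    (hpos : ∀ γ, 0 ≤ (f.coeff γ).re) (m : ℕ) :
    ∀ γ, ((f ^ m).coeff γ).im = 0 ∧ 0 ≤ ((f ^ m).coeff γ).re := by
  classical
  induction m with
  | zero =>
      intro γ
      rw [pow_zero]
      show ((1 : MonoidAlgebra ℂ G).coeff γ).im = 0 ∧ 0 ≤ ((1 : MonoidAlgebra ℂ G).coeff γ).re
      rw [MonoidAlgebra.one_def, MonoidAlgebra.coeff_single, Finsupp.single_apply]
      by_cases h : (1 : G) = γ <;> simp [h]
  | succ m ih =>
      intro γ
      rw [pow_succ, MonoidAlgebra.mul_apply_left, Finsupp.sum]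
      constructor
      · rw [Complex.im_sum]
        apply Finset.sum_eq_zero
        intro μ _
        rw [Complex.mul_im, (ih μ).1, hreal (μ⁻¹ * γ)]
        ring
      · rw [Complex.re_sum]
        apply Finset.sum_nonneg
        intro μ _
        rw [Complex.mul_re, (ih μ).1, hreal (μ⁻¹ * γ)]
        have := mul_nonneg (ih μ).2 (hpos (μ⁻¹ * γ))
        linarith

open scoped Pointwise in
lemma pow_support_len {f : MonoidAlgebra ℂ G} (ℓ : G → ℝ) (hone : ℓ 1 = 0)
    (hsub : ∀ γ μ : G, ℓ (γ * μ) ≤ ℓ γ + ℓ μ) (d : ℕ)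
    (hsupp : ∀ γ ∈ f.coeff.support, ℓ γ ≤ d) (m : ℕ) :
    ∀ γ ∈ (f ^ m).coeff.support, ℓ γ ≤ (d * m : ℕ) := by
  classical
  induction m with
  | zero =>
      intro γ hγ
      rw [pow_zero, MonoidAlgebra.one_def] at hγ
      have := Finsupp.support_single_subset hγ
      simp only [Finset.mem_singleton] at this
      subst this
      simp [hone]
  | succ m ih =>
      intro γ hγ
      rw [pow_succ] at hγ
      have := MonoidAlgebra.support_coeff_mul_subset (f ^ m) f hγ
      rw [Finset.mem_mul] at this
      obtain ⟨x, hx, y, hy, rfl⟩ := this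
      have h1 := ih x hx
      have h2 := hsupp y hy
      have h3 := hsub x y
      push_cast at h1 h2 ⊢
      linarith

end Aux7

/-- If `G` has the Rapid Decay property with constants `C`, `D` (for a length function `ℓ`),
and `f` is a finitely supported symmetric probability measure on `G` whose support has
diameter `d`, with spectral radius `ρ_f = ‖f‖_*`, then the return probabilities satisfy
`f^{(2n)}(e) ≥ C⁻² d^{-2D} n^{-2D} ρ_f^{2n}` for all `n ≥ 1`. -/
theorem return_probability_lower_bound_of_rapid_decay {G : Type*} [Group G] [Countable G]
    (ℓ : G → ℝ) (hnonneg : ∀ γ, 0 ≤ ℓ γ) (hone : ℓ 1 = 0)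
    (hsymmlen : ∀ γ : G, ℓ γ⁻¹ = ℓ γ)
    (hsub : ∀ γ μ : G, ℓ (γ * μ) ≤ ℓ γ + ℓ μ)
    (C D : ℝ) (hC : 0 < C)
    (hRD : ∀ n : ℕ, ∀ g : MonoidAlgebra ℂ G, (∀ γ ∈ g.coeff.support, ℓ γ ≤ n) →
      opNorm g.coeff ≤ C * (n : ℝ) ^ D * l2norm (g.coeff : G → ℂ))
    (f : MonoidAlgebra ℂ G)
    (hreal : ∀ γ, (f.coeff γ).im = 0) (hpos : ∀ γ, 0 ≤ (f.coeff γ).re)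
    (hsym : ∀ γ : G, f.coeff γ⁻¹ = f.coeff γ)
    (hprob : ∑ γ ∈ f.coeff.support, f.coeff γ = 1)
    (d : ℕ) (hd : 1 ≤ d) (hsupp : ∀ γ ∈ f.coeff.support, ℓ γ ≤ d) :
    ∀ n : ℕ, 1 ≤ n →
      (C ^ 2)⁻¹ * (d : ℝ) ^ (-(2 * D)) * (n : ℝ) ^ (-(2 * D)) * opNorm f.coeff ^ (2 * n) ≤
        ((f ^ (2 * n)).coeff (1 : G)).re := by
  classical
  intro n hn
  have hfc : ∀ γ, (starRingEnd ℂ) (f.coeff γ) = f.coeff γ := fun γ => Complex.conj_eq_iff_im.2 (hreal γ)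
  have hsa : SelfAdj f := by
    intro γ
    rw [hsym γ, hfc γ]
  -- f is nonzero
  have hf0 : ∃ γ, f.coeff γ ≠ 0 := by
    by_contra hc
    push_neg at hc
    have hsupp0 : f.coeff.support = ∅ := by
      ext γ; simp [Finsupp.mem_support_iff, hc]
    rw [hsupp0] at hprob
    simp at hprob
  obtain ⟨γ0, hγ0⟩ := hf0
  have hfsummable : Summable fun γ => ‖f.coeff γ‖ ^ 2 := by
    apply summable_of_ne_finset_zero (s := f.coeff.support)
    intro γ hγ
    rw [Finsupp.notMem_support_iff.1 hγ]
    simp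
  have hl2pos : 0 < l2norm (f.coeff : G → ℂ) := by
    apply Real.sqrt_pos.2
    have hle : ‖f.coeff γ0‖ ^ 2 ≤ ∑' γ, ‖f.coeff γ‖ ^ 2 := Summable.le_tsum hfsummable γ0 (fun _ _ => sq_nonneg _)
    have h0 : 0 < ‖f.coeff γ0‖ ^ 2 := pow_pos (norm_pos_iff.2 hγ0) 2
    linarith
  have hρpos : 0 < opNorm f.coeff := lt_of_lt_of_le hl2pos (l2norm_le_opNorm f.coeff)
  have hstep1 : opNorm f.coeff ^ n ≤ opNorm (f ^ n).coeff := opNorm_pow_ge hsa hρpos n hn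
  have hsupp_pow := pow_support_len ℓ hone hsub d hsupp n
  have hRDn := hRD (d * n) (f ^ n) hsupp_pow
  have hrealpow := pow_real_nonneg hreal hpos
  have hsym_pow : ∀ γ : G, (f ^ n).coeff γ⁻¹ = (f ^ n).coeff γ := by
    intro γ
    have h1 := (hsa.pow n) γ
    have h2 : (starRingEnd ℂ) ((f ^ n).coeff γ⁻¹) = (f ^ n).coeff γ⁻¹ :=
      Complex.conj_eq_iff_im.2 (hrealpow n γ⁻¹).1
    rw [← h1, h2]
  -- the return probability as an l2 norm
  have hkey_l2 : ((f ^ (2 * n)).coeff 1).re = l2norm ((f ^ n : MonoidAlgebra ℂ G).coeff : G → ℂ) ^ 2 := by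
    have hsplit : f ^ (2 * n) = f ^ n * f ^ n := by
      rw [← pow_add]; congr 1; omega
    rw [hsplit, MonoidAlgebra.mul_apply_left, Finsupp.sum, Complex.re_sum, l2norm_sq,
      tsum_eq_sum (s := (f ^ n).coeff.support)
        (by intro γ hγ; rw [Finsupp.notMem_support_iff.1 hγ]; simp)]
    apply Finset.sum_congr rfl
    intro γ _
    have hz : ‖(f ^ n).coeff γ‖ ^ 2 = ((f ^ n).coeff γ).re * ((f ^ n).coeff γ).re
        + ((f ^ n).coeff γ).im * ((f ^ n).coeff γ).im := by
      rw [Complex.sq_norm, Complex.normSq_apply]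
    rw [mul_one, hsym_pow γ, Complex.mul_re, (hrealpow n γ).1, hz, (hrealpow n γ).1]
    ring
  have hl2nn : 0 ≤ l2norm ((f ^ n : MonoidAlgebra ℂ G).coeff : G → ℂ) := l2norm_nonneg _
  have hd_pos : (0 : ℝ) < (d : ℝ) := by exact_mod_cast hd
  have hn_pos : (0 : ℝ) < (n : ℝ) := by exact_mod_cast hn
  have hdn_pos : (0 : ℝ) < ((d * n : ℕ) : ℝ) := by
    have : 0 < d * n := Nat.mul_pos hd hn
    exact_mod_cast this
  -- main chain
  have hchain : opNorm f.coeff ^ (2 * n)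
      ≤ C ^ 2 * ((d * n : ℕ) : ℝ) ^ (2 * D) * ((f ^ (2 * n)).coeff 1).re := by
    have h1 : opNorm f.coeff ^ (2 * n) = (opNorm f.coeff ^ n) ^ 2 := by
      rw [← pow_mul]; congr 1; omega
    have h2 : (opNorm f.coeff ^ n) ^ 2 ≤ opNorm (f ^ n).coeff ^ 2 :=
      pow_le_pow_left₀ (pow_nonneg hρpos.le n) hstep1 2
    have h3 : opNorm (f ^ n).coeff ^ 2
        ≤ (C * ((d * n : ℕ) : ℝ) ^ D * l2norm ((f ^ n : MonoidAlgebra ℂ G).coeff : G → ℂ)) ^ 2 :=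
      pow_le_pow_left₀ (opNorm_nonneg _) hRDn 2
    have hsq_rpow : (((d * n : ℕ) : ℝ) ^ D) ^ (2 : ℕ) = ((d * n : ℕ) : ℝ) ^ (2 * D) := by
      rw [← Real.rpow_natCast (((d * n : ℕ) : ℝ) ^ D) 2, ← Real.rpow_mul hdn_pos.le]
      norm_num [mul_comm]
    have h4 : (C * ((d * n : ℕ) : ℝ) ^ D * l2norm ((f ^ n : MonoidAlgebra ℂ G).coeff : G → ℂ)) ^ 2
        = C ^ 2 * ((d * n : ℕ) : ℝ) ^ (2 * D)
          * l2norm ((f ^ n : MonoidAlgebra ℂ G).coeff : G → ℂ) ^ 2 := by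
      rw [mul_pow, mul_pow, hsq_rpow]
    rw [hkey_l2, h1]
    calc (opNorm f.coeff ^ n) ^ 2 ≤ opNorm (f ^ n).coeff ^ 2 := h2
      _ ≤ _ := h3
      _ = _ := h4
  have hsplit_rpow : ((d * n : ℕ) : ℝ) ^ (2 * D) = (d : ℝ) ^ (2 * D) * (n : ℝ) ^ (2 * D) := by
    push_cast
    exact Real.mul_rpow hd_pos.le hn_pos.le
  have hKpos : (0 : ℝ) < C ^ 2 * ((d : ℝ) ^ (2 * D) * (n : ℝ) ^ (2 * D)) := by positivity
  have heq : (C ^ 2)⁻¹ * (d : ℝ) ^ (-(2 * D)) * (n : ℝ) ^ (-(2 * D)) * opNorm f.coeff ^ (2 * n)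
      = opNorm f.coeff ^ (2 * n) / (C ^ 2 * ((d : ℝ) ^ (2 * D) * (n : ℝ) ^ (2 * D))) := by
    rw [Real.rpow_neg hd_pos.le, Real.rpow_neg hn_pos.le, div_eq_mul_inv, mul_inv, mul_inv]
    ring
  rw [heq, div_le_iff₀ hKpos]
  calc opNorm f.coeff ^ (2 * n) ≤ C ^ 2 * ((d * n : ℕ) : ℝ) ^ (2 * D) * ((f ^ (2 * n)).coeff 1).re :=
        hchain
    _ = ((f ^ (2 * n)).coeff 1).re * (C ^ 2 * ((d : ℝ) ^ (2 * D) * (n : ℝ) ^ (2 * D))) := by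
        rw [hsplit_rpow]; ring
end

section
/- RD(3) implies RD(6): if there exist c, s ≥ 0 with ‖f‖_* ≤ c‖f‖_{ℓ,s} for all f ∈ CG, then with k = s+1 there exists M such that for all unit vectors ξ, η ∈ ℓ²(G), Σ_{γ∈G} |⟨γ·ξ, η⟩|²/(1+ℓ(γ))^{2k} ≤ M. -/
open scoped BigOperators

/-- The weighted Sobolev norm `‖f‖_{ℓ,s} = (Σ_γ |f(γ)|² (1+ℓ(γ))^{2s})^{1/2}`. -/
noncomputable def sobolevNorm {G : Type*} (ℓ : G → ℕ) (s : ℝ) (f : G →₀ ℂ) : ℝ :=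
  Real.sqrt (∑ γ ∈ f.support, ‖f γ‖ ^ 2 * (1 + (ℓ γ : ℝ)) ^ (2 * s))

/-- The coefficient `⟨γ·ξ, η⟩` of the left regular representation. -/
noncomputable def coeffRep {G : Type*} [Group G] (ξ η : G → ℂ) (γ : G) : ℂ :=
  ∑' g, ξ (γ⁻¹ * g) * (starRingEnd ℂ) (η g)

private lemma summable_mul_conj {G : Type*} {a b : G → ℂ}
    (ha : Summable fun γ => ‖a γ‖ ^ 2) (hb : Summable fun γ => ‖b γ‖ ^ 2) :
    Summable fun γ => a γ * b γ := by
  refine Summable.of_norm (Summable.of_nonneg_of_le (fun g => norm_nonneg _)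
    (fun g => ?_) ((ha.add hb).div_const 2))
  rw [norm_mul]
  nlinarith [norm_nonneg (a g), norm_nonneg (b g), sq_nonneg (‖a g‖ - ‖b g‖)]

private lemma summable_mul_real {G : Type*} {a b : G → ℝ}
    (ha : Summable fun γ => a γ ^ 2) (hb : Summable fun γ => b γ ^ 2) :
    Summable fun γ => a γ * b γ := by
  refine Summable.of_norm (Summable.of_nonneg_of_le (fun g => norm_nonneg _)
    (fun g => ?_) ((ha.add hb).div_const 2))
  rw [Real.norm_eq_abs, abs_mul]
  nlinarith [abs_nonneg (a g), abs_nonneg (b g), sq_nonneg (|a g| - |b g|),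
    sq_abs (a g), sq_abs (b g)]

private lemma tsum_CS {G : Type*} {a b : G → ℝ}
    (ha : Summable fun γ => a γ ^ 2) (hb : Summable fun γ => b γ ^ 2) :
    ∑' γ, a γ * b γ ≤ Real.sqrt (∑' γ, a γ ^ 2) * Real.sqrt (∑' γ, b γ ^ 2) := by
  refine Summable.tsum_le_of_sum_le (summable_mul_real ha hb) fun F => ?_
  calc ∑ γ ∈ F, a γ * b γ
      ≤ Real.sqrt (∑ γ ∈ F, a γ ^ 2) * Real.sqrt (∑ γ ∈ F, b γ ^ 2) :=
        Real.sum_mul_le_sqrt_mul_sqrt _ _ _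
    _ ≤ _ := by
        gcongr
        · exact Summable.sum_le_tsum F (fun _ _ => sq_nonneg _) ha
        · exact Summable.sum_le_tsum F (fun _ _ => sq_nonneg _) hb

private lemma tsum_translate {G : Type*} [Group G] (μ : G) (h : G → ℝ) :
    ∑' g : G, h (μ⁻¹ * g) = ∑' g, h g := by
  have := (Equiv.mulLeft μ).tsum_eq (fun g => h (μ⁻¹ * g))
  simpa using this.symm

private lemma summable_translate {G : Type*} [Group G] (μ : G) (h : G → ℝ)
    (hh : Summable h) : Summable fun g => h (μ⁻¹ * g) := by
  have := ((Equiv.mulLeft μ⁻¹).summable_iff (f := h)).mpr hh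
  simpa [Function.comp_def] using this

private lemma conv_pointwise {G : Type*} [Group G] (f : G →₀ ℂ) (ζ : G → ℂ) (g : G) :
    ‖conv f ζ g‖ ^ 2 ≤ (∑ μ ∈ f.support, ‖f μ‖ ^ 2) * ∑ μ ∈ f.support, ‖ζ (μ⁻¹ * g)‖ ^ 2 := by
  calc ‖conv f ζ g‖ ^ 2 ≤ (∑ μ ∈ f.support, ‖f μ‖ * ‖ζ (μ⁻¹ * g)‖) ^ 2 := by
        have h1 : ‖conv f ζ g‖ ≤ ∑ μ ∈ f.support, ‖f μ‖ * ‖ζ (μ⁻¹ * g)‖ :=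
          (norm_sum_le _ _).trans
            (le_of_eq (Finset.sum_congr rfl fun μ _ => norm_mul _ _))
        exact pow_le_pow_left₀ (norm_nonneg _) h1 2
    _ ≤ _ := Finset.sum_mul_sq_le_sq_mul_sq _ _ _

private lemma summable_conv_sq {G : Type*} [Group G] (f : G →₀ ℂ) {ζ : G → ℂ}
    (hζ : Summable fun γ => ‖ζ γ‖ ^ 2) :
    Summable fun g => ‖conv f ζ g‖ ^ 2 := by
  have hu : Summable fun g => ∑ μ ∈ f.support, ‖ζ (μ⁻¹ * g)‖ ^ 2 :=
    summable_sum (f := fun μ g => ‖ζ (μ⁻¹ * g)‖ ^ 2)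
      (fun μ _ => summable_translate μ (fun γ => ‖ζ γ‖ ^ 2) hζ)
  exact Summable.of_nonneg_of_le (fun g => sq_nonneg _) (fun g => conv_pointwise f ζ g)
    (hu.mul_left _)

private lemma tsum_conv_sq_le {G : Type*} [Group G] (f : G →₀ ℂ) {ζ : G → ℂ}
    (hζ : Summable fun γ => ‖ζ γ‖ ^ 2) :
    ∑' g, ‖conv f ζ g‖ ^ 2 ≤
      (∑ μ ∈ f.support, ‖f μ‖ ^ 2) * ((f.support.card : ℝ) * ∑' γ, ‖ζ γ‖ ^ 2) := by
  have hu : Summable fun g => ∑ μ ∈ f.support, ‖ζ (μ⁻¹ * g)‖ ^ 2 :=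
    summable_sum (f := fun μ g => ‖ζ (μ⁻¹ * g)‖ ^ 2)
      (fun μ _ => summable_translate μ (fun γ => ‖ζ γ‖ ^ 2) hζ)
  have h1 := Summable.tsum_le_tsum (conv_pointwise f ζ) (summable_conv_sq f hζ) (hu.mul_left _)
  refine h1.trans (le_of_eq ?_)
  rw [tsum_mul_left]
  congr 1
  rw [Summable.tsum_finsetSum (fun μ _ => summable_translate μ (fun γ => ‖ζ γ‖ ^ 2) hζ)]
  rw [Finset.sum_congr rfl fun μ _ => tsum_translate μ (fun γ => ‖ζ γ‖ ^ 2)]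
  simp [mul_comm]

/-- RD(3) implies RD(6): if `‖f‖_* ≤ c ‖f‖_{ℓ,s}` for all `f ∈ ℂG`, then with `k = s+1`
there is `M` such that for all unit vectors `ξ, η ∈ ℓ²(G)`,
`Σ_γ |⟨γ·ξ,η⟩|² / (1+ℓ(γ))^{2k} ≤ M` (all finite partial sums are bounded by `M`). -/
theorem RD3_implies_RD6 {G : Type*} [Group G] [Countable G]
    (ℓ : G → ℕ) (hone : ℓ 1 = 0) (hsymmlen : ∀ γ : G, ℓ γ⁻¹ = ℓ γ)
    (hsub : ∀ γ μ : G, ℓ (γ * μ) ≤ ℓ γ + ℓ μ)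
    (c s : ℝ) (hc : 0 ≤ c) (hs : 0 ≤ s)
    (hRD3 : ∀ f : G →₀ ℂ, opNorm f ≤ c * sobolevNorm ℓ s f) :
    ∃ M : ℝ, ∀ ξ η : G → ℂ,
      Summable (fun γ => ‖ξ γ‖ ^ 2) → Summable (fun γ => ‖η γ‖ ^ 2) →
      l2norm ξ = 1 → l2norm η = 1 →
      ∀ F : Finset G,
        ∑ γ ∈ F, ‖coeffRep ξ η γ‖ ^ 2 / (1 + (ℓ γ : ℝ)) ^ (2 * (s + 1)) ≤ M := by
  classical
  refine ⟨c ^ 2, fun ξ η hξ hη hξ1 hη1 F => ?_⟩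
  have hξt : ∑' γ, ‖ξ γ‖ ^ 2 = 1 := Real.sqrt_eq_one.mp hξ1
  have hd : ∀ γ : G, (0:ℝ) < (1 + (ℓ γ : ℝ)) ^ (2 * (s + 1)) :=
    fun γ => Real.rpow_pos_of_pos (by positivity) _
  set S : ℝ := ∑ γ ∈ F, ‖coeffRep ξ η γ‖ ^ 2 / (1 + (ℓ γ : ℝ)) ^ (2 * (s + 1)) with hS_def
  have hS0 : 0 ≤ S := Finset.sum_nonneg fun γ _ => by positivity
  -- the test function
  set f : G →₀ ℂ := Finsupp.onFinset F
      (fun γ => if γ ∈ F then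
        (starRingEnd ℂ) (coeffRep ξ η γ) / (((1 + (ℓ γ : ℝ)) ^ (2 * (s + 1)) : ℝ) : ℂ) else 0)
      (fun γ h => by by_contra hγ; simp [hγ] at h) with hf_def
  have hf_apply : ∀ γ, f γ = if γ ∈ F then
      (starRingEnd ℂ) (coeffRep ξ η γ) / (((1 + (ℓ γ : ℝ)) ^ (2 * (s + 1)) : ℝ) : ℂ) else 0 :=
    fun γ => rfl
  have hf_supp : f.support ⊆ F := Finsupp.support_onFinset_subset
  -- operator norm bound
  have hop : l2norm (conv f ξ) ≤ opNorm f := by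
    rw [opNorm]
    refine le_csSup ⟨Real.sqrt ((∑ μ ∈ f.support, ‖f μ‖ ^ 2) * (f.support.card : ℝ)), ?_⟩
      ⟨ξ, hξ, hξ1, rfl⟩
    rintro x ⟨ζ, hζ, hζ1, rfl⟩
    have hζt : ∑' γ, ‖ζ γ‖ ^ 2 = 1 := Real.sqrt_eq_one.mp hζ1
    have hb := tsum_conv_sq_le f hζ
    rw [hζt, mul_one] at hb
    exact Real.sqrt_le_sqrt hb
  -- the pairing identity
  have hηc : Summable fun g => ‖(starRingEnd ℂ) (η g)‖ ^ 2 := by simpa using hη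
  have htr : ∀ μ : G, Summable fun g => ‖ξ (μ⁻¹ * g)‖ ^ 2 :=
    fun μ => summable_translate μ (fun γ => ‖ξ γ‖ ^ 2) hξ
  have hterm : ∀ μ : G, Summable fun g => ξ (μ⁻¹ * g) * (starRingEnd ℂ) (η g) :=
    fun μ => summable_mul_conj (htr μ) hηc
  have hP : ∑' g, conv f ξ g * (starRingEnd ℂ) (η g) = (S : ℂ) := by
    have step1 : ∀ g : G, conv f ξ g * (starRingEnd ℂ) (η g)
        = ∑ μ ∈ f.support, f μ * (ξ (μ⁻¹ * g) * (starRingEnd ℂ) (η g)) := by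
      intro g
      rw [conv, Finset.sum_mul]
      exact Finset.sum_congr rfl fun μ _ => by ring
    calc ∑' g, conv f ξ g * (starRingEnd ℂ) (η g)
        = ∑' g, ∑ μ ∈ f.support, f μ * (ξ (μ⁻¹ * g) * (starRingEnd ℂ) (η g)) :=
          tsum_congr step1
      _ = ∑ μ ∈ f.support, ∑' g, f μ * (ξ (μ⁻¹ * g) * (starRingEnd ℂ) (η g)) :=
          Summable.tsum_finsetSum (fun μ _ => (hterm μ).mul_left _)
      _ = ∑ μ ∈ f.support, f μ * coeffRep ξ η μ := by
          refine Finset.sum_congr rfl fun μ _ => ?_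
          rw [tsum_mul_left, coeffRep]
      _ = ∑ μ ∈ F, f μ * coeffRep ξ η μ :=
          Finset.sum_subset hf_supp (fun μ _ hμ => by
            rw [Finsupp.notMem_support_iff.mp hμ, zero_mul])
      _ = ∑ μ ∈ F, ((‖coeffRep ξ η μ‖ ^ 2 / (1 + (ℓ μ : ℝ)) ^ (2 * (s + 1)) : ℝ) : ℂ) := by
          refine Finset.sum_congr rfl fun μ hμ => ?_
          rw [hf_apply, if_pos hμ, div_mul_eq_mul_div, ← Complex.normSq_eq_conj_mul_self,
            ← Complex.ofReal_div]
          congr 1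
          rw [Complex.normSq_eq_norm_sq]
      _ = (S : ℂ) := by rw [hS_def]; push_cast; ring
  -- Cauchy-Schwarz
  have hcs : S ≤ l2norm (conv f ξ) := by
    have hsum2 : Summable fun g => ‖conv f ξ g‖ * ‖η g‖ :=
      summable_mul_real (a := fun g => ‖conv f ξ g‖) (b := fun g => ‖η g‖)
        (summable_conv_sq f hξ) hη
    have h1 : ‖∑' g, conv f ξ g * (starRingEnd ℂ) (η g)‖ ≤ ∑' g, ‖conv f ξ g‖ * ‖η g‖ := by
      refine (norm_tsum_le_tsum_norm (hsum2.congr fun g => ?_)).trans_eq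
        (tsum_congr fun g => by rw [norm_mul, RCLike.norm_conj])
      rw [norm_mul, RCLike.norm_conj]
    have h2 : ∑' g, ‖conv f ξ g‖ * ‖η g‖ ≤ l2norm (conv f ξ) * l2norm η := by
      have := tsum_CS (a := fun g => ‖conv f ξ g‖) (b := fun g => ‖η g‖)
        (summable_conv_sq f hξ) hη
      simpa [l2norm] using this
    calc S = ‖(S : ℂ)‖ := by rw [Complex.norm_real, Real.norm_eq_abs, abs_of_nonneg hS0]
      _ = ‖∑' g, conv f ξ g * (starRingEnd ℂ) (η g)‖ := by rw [hP]
      _ ≤ ∑' g, ‖conv f ξ g‖ * ‖η g‖ := h1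
      _ ≤ l2norm (conv f ξ) * l2norm η := h2
      _ = l2norm (conv f ξ) := by rw [hη1, mul_one]
  -- Sobolev norm bound
  have hsob : sobolevNorm ℓ s f ≤ Real.sqrt S := by
    rw [sobolevNorm]
    apply Real.sqrt_le_sqrt
    calc ∑ γ ∈ f.support, ‖f γ‖ ^ 2 * (1 + (ℓ γ : ℝ)) ^ (2 * s)
        ≤ ∑ γ ∈ F, ‖f γ‖ ^ 2 * (1 + (ℓ γ : ℝ)) ^ (2 * s) :=
          Finset.sum_le_sum_of_subset_of_nonneg hf_supp (fun γ _ _ =>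
            mul_nonneg (sq_nonneg _) (Real.rpow_nonneg (by positivity) _))
      _ ≤ ∑ γ ∈ F, ‖coeffRep ξ η γ‖ ^ 2 / (1 + (ℓ γ : ℝ)) ^ (2 * (s + 1)) := by
          refine Finset.sum_le_sum fun γ hγ => ?_
          have h1 : (1:ℝ) ≤ 1 + (ℓ γ : ℝ) := by linarith [Nat.cast_nonneg (α := ℝ) (ℓ γ)]
          have h2 : (1 + (ℓ γ : ℝ)) ^ (2 * s) ≤ (1 + (ℓ γ : ℝ)) ^ (2 * (s + 1)) :=
            Real.rpow_le_rpow_of_exponent_le h1 (by linarith)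
          have hdγ := hd γ
          have h2s : (0:ℝ) < (1 + (ℓ γ : ℝ)) ^ (2 * s) :=
            Real.rpow_pos_of_pos (by positivity) _
          have hnorm : ‖(starRingEnd ℂ) (coeffRep ξ η γ) /
              (((1 + (ℓ γ : ℝ)) ^ (2 * (s + 1)) : ℝ) : ℂ)‖
              = ‖coeffRep ξ η γ‖ / (1 + (ℓ γ : ℝ)) ^ (2 * (s + 1)) := by
            rw [norm_div, RCLike.norm_conj, Complex.norm_real, Real.norm_eq_abs, abs_of_pos hdγ]
          rw [hf_apply, if_pos hγ, hnorm, div_pow, div_mul_eq_mul_div,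
            div_le_div_iff₀ (by positivity) hdγ]
          have hn0 : (0:ℝ) ≤ ‖coeffRep ξ η γ‖ ^ 2 := sq_nonneg _
          nlinarith [mul_le_mul_of_nonneg_left h2 hn0, hdγ.le,
            mul_nonneg hn0 hdγ.le]
      _ = S := hS_def.symm
  -- conclude
  have hchain : S ≤ c * Real.sqrt S :=
    hcs.trans (hop.trans ((hRD3 f).trans (mul_le_mul_of_nonneg_left hsob hc)))
  nlinarith [Real.sq_sqrt hS0, Real.sqrt_nonneg S, sq_nonneg (c - Real.sqrt S)]
end
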